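/- The R_I Hahn polynomials satisfy the three-term recurrence A_n P_{n+1}(x) - (A_n + B_n) P_n(x) + B_n P_{n-1}(x) = -x [ (n+α+1) P_n(x) + (n(α+β+n)/(1-β-n)) P_{n-1}(x) ], where A_n = (n-N)(β+n) and B_n = n(α+β+n), as an identity of polynomials in x. -/

import Mathlib

noncomputable def poch (a : ℝ) (n : ℕ) : ℝ := ∏ i ∈ Finset.range n, (a + i)

/-- The R_I polynomial of Hahn type P_n(x; α, β, N). -/
noncomputable def P (α β : ℝ) (N n : ℕ) (x : ℝ) : ℝ :=
  ∑ k ∈ Finset.range (n + 1),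
    poch (-(n : ℝ)) k * poch (α + 1) k /
      ((Nat.factorial k : ℝ) * poch (-(N : ℝ)) k * poch (1 - β - n) k) * poch (-x) k

/-!
Expand everything in the basis `(-x)_k`. Multiplication by `y = -x` acts on it by
`y (y)_k = (y)_{k+1} - k (y)_k`, so the recurrence is equivalent to an identity between the
coefficients `c_m(k)` of `P_{n+1}, P_n, P_{n-1}` and those of
`(n+α+1) P_n + n(α+β+n)/(1-β-n) P_{n-1}`. Each coefficient occurring there is `c_n(j)` times
an explicit rational function of `j, n, N, α, β`, which turns that identity into one between
rational functions.
-/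

open Finset

theorem poch_zero (a : ℝ) : poch a 0 = 1 := prod_range_zero _

theorem poch_succ (a : ℝ) (k : ℕ) : poch a (k + 1) = poch a k * (a + k) :=
  prod_range_succ _ _

theorem poch_succ' (a : ℝ) (k : ℕ) : poch a (k + 1) = a * poch (a + 1) k := by
  rw [poch, prod_range_succ', poch, mul_comm]
  push_cast
  simp only [add_zero, add_assoc, add_comm (1 : ℝ)]

theorem poch_neg_natCast_eq_zero {m k : ℕ} (h : m < k) : poch (-m) k = 0 :=
  prod_eq_zero (mem_range.2 h) (neg_add_cancel _)

theorem poch_sub_one_succ (a : ℝ) (k : ℕ) : poch (a - 1) (k + 1) = (a - 1) * poch a k := by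
  rw [poch_succ', sub_add_cancel]

theorem poch_eq_poch_sub_one (a : ℝ) (k : ℕ) (ha : a - 1 ≠ 0) :
    poch a k = poch (a - 1) k * (a - 1 + k) / (a - 1) := by
  rw [eq_div_iff ha, mul_comm, ← poch_sub_one_succ, poch_succ]

theorem mul_poch (y : ℝ) (k : ℕ) : y * poch y k = poch y (k + 1) - k * poch y k := by
  rw [poch_succ]; ring

theorem sum_mul_poch_eq_mul_sum (y : ℝ) (E D : ℕ → ℝ) (K : ℕ) (hE : E 0 = 0) (hD : D K = 0)
    (hED : ∀ k < K, E (k + 1) = D k - (k + 1) * D (k + 1)) :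
    ∑ k ∈ range (K + 1), E k * poch y k = y * ∑ k ∈ range (K + 1), D k * poch y k := by
  calc ∑ k ∈ range (K + 1), E k * poch y k
      = ∑ k ∈ range K, (D k * poch y (k + 1) - (k + 1) * D (k + 1) * poch y (k + 1)) := by
        rw [sum_range_succ', hE, zero_mul, add_zero]
        refine sum_congr rfl fun k hk => ?_
        rw [hED k (mem_range.1 hk)]; ring
    _ = ∑ k ∈ range (K + 1), D k * poch y (k + 1) - ∑ k ∈ range (K + 1), k * D k * poch y k := by
        rw [sum_range_succ _ K, hD, sum_range_succ' _ K, sum_sub_distrib]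
        push_cast
        ring
    _ = y * ∑ k ∈ range (K + 1), D k * poch y k := by
        rw [mul_sum, ← sum_sub_distrib]
        exact sum_congr rfl fun k _ => by rw [mul_left_comm, mul_poch]; ring

section Hahn

variable (α β : ℝ) (N : ℕ)

noncomputable def hahnCoeff (m k : ℕ) : ℝ :=
  poch (-(m : ℝ)) k * poch (α + 1) k /
    ((Nat.factorial k : ℝ) * poch (-(N : ℝ)) k * poch (1 - β - m) k)

theorem P_eq_sum_hahnCoeff {m K : ℕ} (h : m + 1 ≤ K) (x : ℝ) :
    P α β N m x = ∑ k ∈ range K, hahnCoeff α β N m k * poch (-x) k := by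
  refine sum_subset (range_subset_range.2 h) fun k _ hk => ?_
  rw [poch_neg_natCast_eq_zero (by simpa using hk)]
  simp

theorem hahnCoeff_zero_right (m : ℕ) : hahnCoeff α β N m 0 = 1 := by
  simp [hahnCoeff, poch_zero]

theorem hahnCoeff_eq_zero_of_lt {m k : ℕ} (h : m < k) : hahnCoeff α β N m k = 0 := by
  simp [hahnCoeff, poch_neg_natCast_eq_zero h]

/- These ratio formulas need no side conditions: `a / b * (c / d) = a * c / (b * d)` holds in a
field even when a denominator vanishes. -/
theorem hahnCoeff_succ_right (m k : ℕ) :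
    hahnCoeff α β N m (k + 1) = hahnCoeff α β N m k *
      ((k - m) * (α + 1 + k) / ((k + 1) * (k - N) * (1 - β - m + k))) := by
  rw [hahnCoeff, hahnCoeff, div_mul_div_comm]
  simp only [poch_succ, Nat.factorial_succ]
  push_cast
  congr 1 <;> ring

theorem hahnCoeff_succ_succ (m k : ℕ) :
    hahnCoeff α β N (m + 1) (k + 1) = hahnCoeff α β N m k *
      (-(m + 1) * (α + 1 + k) / ((k + 1) * (k - N) * (-β - m))) := by
  rw [hahnCoeff, hahnCoeff, div_mul_div_comm]
  rw [show -((m + 1 : ℕ) : ℝ) = -m - 1 by push_cast; ring,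
    show 1 - β - ((m + 1 : ℕ) : ℝ) = 1 - β - m - 1 by push_cast; ring]
  rw [poch_sub_one_succ, poch_sub_one_succ]
  simp only [poch_succ, Nat.factorial_succ]
  push_cast
  congr 1 <;> ring

theorem hahnCoeff_eq_hahnCoeff_succ {m : ℕ} (k : ℕ) (hβ : β + m ≠ 0) :
    hahnCoeff α β N m k = hahnCoeff α β N (m + 1) k *
      ((k - m - 1) * (-β - m) / ((-m - 1) * (k - β - m))) := by
  rw [hahnCoeff, hahnCoeff,
    poch_eq_poch_sub_one (-(m : ℝ)) k (by linarith [m.cast_nonneg (α := ℝ)]),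
    poch_eq_poch_sub_one (1 - β - m) k (by contrapose! hβ; linarith)]
  push_cast
  simp only [div_eq_mul_inv, mul_inv, inv_inv]
  ring_nf

noncomputable def recurrenceRhsCoeff (n k : ℕ) : ℝ :=
  (n + α + 1) * hahnCoeff α β N n k
    + n * (α + β + n) / (1 - β - n) * hahnCoeff α β N (n - 1) k

theorem hahnCoeff_three_term {n : ℕ} (hn : 1 ≤ n) (hnN : n + 1 ≤ N)
    (hβ : ∀ i ≤ n, β + i ≠ 0) {j : ℕ} (hj : j ≤ n) :
    ((n : ℝ) - N) * (β + n) * hahnCoeff α β N (n + 1) (j + 1)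
      - (((n : ℝ) - N) * (β + n) + n * (α + β + n)) * hahnCoeff α β N n (j + 1)
      + n * (α + β + n) * hahnCoeff α β N (n - 1) (j + 1)
    = recurrenceRhsCoeff α β N n j - (j + 1) * recurrenceRhsCoeff α β N n (j + 1) := by
  obtain ⟨m, rfl⟩ := Nat.exists_eq_add_of_le' hn
  have hβm : β + m ≠ 0 := by exact_mod_cast hβ m (by omega)
  simp only [recurrenceRhsCoeff, Nat.add_sub_cancel]
  rw [hahnCoeff_eq_hahnCoeff_succ α β N (j + 1) hβm, hahnCoeff_eq_hahnCoeff_succ α β N j hβm,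
    hahnCoeff_succ_right α β N (m + 1) j, hahnCoeff_succ_succ α β N (m + 1) j]
  push_cast
  have hjN : (j : ℝ) - N ≠ 0 := sub_ne_zero.2 (by exact_mod_cast (by omega : j ≠ N))
  have hβn : -β - (m + 1) ≠ 0 := by
    have := hβ (m + 1) le_rfl; push_cast at this; contrapose! this; linarith
  have hβm' : 1 - β - (m + 1) ≠ 0 := by contrapose! hβm; linarith
  have hm : -(m : ℝ) - 1 ≠ 0 := by linarith [m.cast_nonneg (α := ℝ)]
  have hj1 : (j : ℝ) + 1 ≠ 0 := by positivity
  generalize hahnCoeff α β N (m + 1) j = c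
  -- For `j ≥ m` the denominators `1 - β`, `2 - β` may vanish; the terms carrying them then have
  -- a vanishing numerator factor `j + 1 - m - 1`, `j - m - 1` or `j - (m + 1)`.
  rcases (show j + 1 < m + 1 ∨ m = j ∨ j = m + 1 by omega) with hjm | rfl | rfl
  · have h1 : (j : ℝ) - β - m ≠ 0 := by
      have := hβ (m - j) (by omega); rw [Nat.cast_sub (by omega)] at this
      contrapose! this; linarith
    have h2 : (j : ℝ) + 1 - β - m ≠ 0 := by
      have := hβ (m - j - 1) (by omega)
      rw [Nat.cast_sub (by omega), Nat.cast_sub (by omega)] at this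
      contrapose! this; push_cast; linarith
    have h3 : 1 - β - (m + 1) + (j : ℝ) ≠ 0 := by contrapose! h1; linarith
    field_simp
    ring
  · have hβ0 : β ≠ 0 := by simpa using hβ 0 (by omega)
    have h1 : (m : ℝ) - β - m ≠ 0 := by contrapose! hβ0; linarith
    have h3 : 1 - β - (m + 1) + (m : ℝ) ≠ 0 := by contrapose! hβ0; linarith
    rw [show (m : ℝ) + 1 - m - 1 = 0 by ring]
    simp only [zero_mul, zero_div, mul_zero, add_zero]
    field_simp
    ring
  · push_cast at hjN hj1 ⊢
    simp only [sub_self, zero_mul, zero_div, mul_zero, add_zero, sub_zero]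
    field_simp
    ring

end Hahn

theorem stmt14_general (N n : ℕ) (α β : ℝ) (hn1 : 1 ≤ n) (hn2 : n + 1 ≤ N)
    (h2 : ∀ m ≤ n + 1, ∀ k ≤ m, poch (1 - β - (m : ℝ)) k ≠ 0) :
    ∀ x : ℝ,
      ((n : ℝ) - N) * (β + n) * P α β N (n + 1) x
        - (((n : ℝ) - N) * (β + n) + (n : ℝ) * (α + β + n)) * P α β N n x
        + (n : ℝ) * (α + β + n) * P α β N (n - 1) x
      = -x * (((n : ℝ) + α + 1) * P α β N n x
          + (n : ℝ) * (α + β + n) / (1 - β - (n : ℝ)) * P α β N (n - 1) x) := by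
  intro x
  have hβ : ∀ i ≤ n, β + i ≠ 0 := fun i hi => by
    have := prod_ne_zero_iff.1 (h2 (n + 1) le_rfl (n + 1) le_rfl) (n - i)
      (by simp only [mem_range]; omega)
    rw [Nat.cast_sub hi] at this
    push_cast at this
    contrapose! this
    linarith
  rw [P_eq_sum_hahnCoeff α β N (m := n + 1) (K := n + 2) le_rfl,
    P_eq_sum_hahnCoeff α β N (m := n) (K := n + 2) (by omega),
    P_eq_sum_hahnCoeff α β N (m := n - 1) (K := n + 2) (by omega)]
  calc _ = ∑ k ∈ range (n + 2), (((n : ℝ) - N) * (β + n) * hahnCoeff α β N (n + 1) k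
          - (((n : ℝ) - N) * (β + n) + n * (α + β + n)) * hahnCoeff α β N n k
          + n * (α + β + n) * hahnCoeff α β N (n - 1) k) * poch (-x) k := by
        simp only [mul_sum, ← sum_sub_distrib, ← sum_add_distrib]
        exact sum_congr rfl fun k _ => by ring
    _ = -x * ∑ k ∈ range (n + 2), recurrenceRhsCoeff α β N n k * poch (-x) k := by
        refine sum_mul_poch_eq_mul_sum _ _ _ (n + 1) ?_ ?_
          fun j hj => hahnCoeff_three_term α β N hn1 hn2 hβ (by omega)
        · simp only [hahnCoeff_zero_right]; ring
        · simp only [recurrenceRhsCoeff, hahnCoeff_eq_zero_of_lt α β N (Nat.lt_succ_self n),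
            hahnCoeff_eq_zero_of_lt α β N (by omega : n - 1 < n + 1), mul_zero, add_zero]
    _ = _ := by
        simp only [recurrenceRhsCoeff, mul_sum, ← sum_add_distrib]
        exact sum_congr rfl fun k _ => by ring

theorem stmt14 (N n : ℕ) (α β : ℝ) (hn1 : 1 ≤ n) (hn2 : n + 1 ≤ N)
    (h1 : (1 - β - (n : ℝ)) ≠ 0)
    (h2 : ∀ m ≤ n + 1, ∀ k ≤ m, poch (1 - β - (m : ℝ)) k ≠ 0)
    (h3 : ∀ k ≤ n + 1, poch (-(N : ℝ)) k ≠ 0) :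
    ∀ x : ℝ,
      ((n : ℝ) - N) * (β + n) * P α β N (n + 1) x
        - (((n : ℝ) - N) * (β + n) + (n : ℝ) * (α + β + n)) * P α β N n x
        + (n : ℝ) * (α + β + n) * P α β N (n - 1) x
      = -x * (((n : ℝ) + α + 1) * P α β N n x
          + (n : ℝ) * (α + β + n) / (1 - β - (n : ℝ)) * P α β N (n - 1) x) :=
  stmt14_general N n α β hn1 hn2 h2
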